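/- arXiv:1207.6488 — 6 statements merged into one kernel-verified Lean document; each statement's English description precedes it below -/
import Mathlib

section
/- For all integers n, m, k with 2 ≤ m ≤ n and m−1 ≤ k ≤ n−1, one has (∏_{i=k+1}^{n−1} (1 − (m(m−1))/((i+1)i))) · (m(m−1))/((k+1)k) = (m(m−1))/(n·k) · ∏_{i=k+1}^{n−1} ((i+1−m)(i+m))/i², where empty products equal 1. (The left-hand side is the probability, obtained from a sequence of Bernoulli trials, that the most recent coalescence of m sampled lineages in the Yule n-tree occurs at the k-th bifurcation event; the right-hand side is the closed form p^{(m)}_{n,k} of Lemma 1.) -/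
/-!
Since `1 - m(m-1)/((i+1)i) = (i+1-m)(i+m)/((i+1)i)`, each factor on the left is the corresponding
factor on the right times `i/(i+1)`. These extra factors telescope to `(k+1)/n`, which turns
`m(m-1)/((k+1)k)` into `m(m-1)/(nk)`.
-/

open Finset

theorem prod_Ico_natCast_div_succ {K : Type*} [Field K] [CharZero K] {a b : ℕ}
    (ha : 1 ≤ a) (hab : a ≤ b) :
    ∏ i ∈ Ico a b, (i : K) / (i + 1) = a / b := by
  induction b, hab using Nat.le_induction with
  | base => simp [div_self (Nat.cast_ne_zero.mpr (by omega : a ≠ 0) : (a : K) ≠ 0)]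
  | succ b hab ih =>
    have hb : (b : K) ≠ 0 := Nat.cast_ne_zero.mpr (by omega)
    rw [prod_Ico_succ_top hab, ih]
    push_cast
    field_simp

theorem one_sub_mul_sub_one_div_eq_mul {K : Type*} [Field K] {x i : K}
    (hi : i ≠ 0) (hi1 : i + 1 ≠ 0) :
    1 - x * (x - 1) / ((i + 1) * i) = (i + 1 - x) * (i + x) / i ^ 2 * (i / (i + 1)) := by
  field_simp
  ring

theorem statement1_general (n m k : ℕ)
    (hk2 : k ≤ n - 1) :
    (∏ i ∈ Finset.Icc (k + 1) (n - 1),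
        (1 - ((m : ℝ) * ((m : ℝ) - 1)) / (((i : ℝ) + 1) * (i : ℝ))))
      * (((m : ℝ) * ((m : ℝ) - 1)) / (((k : ℝ) + 1) * (k : ℝ)))
      = ((m : ℝ) * ((m : ℝ) - 1)) / ((n : ℝ) * (k : ℝ))
        * ∏ i ∈ Finset.Icc (k + 1) (n - 1),
            (((i : ℝ) + 1 - (m : ℝ)) * ((i : ℝ) + (m : ℝ))) / (i : ℝ) ^ 2 := by
  rcases Nat.eq_zero_or_pos n with rfl | hn
  · -- then `k = 0` and both sides are `0` because of the division by `k`
    simp [Nat.le_zero.mp hk2]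
  have hIcc : Icc (k + 1) (n - 1) = Ico (k + 1) n := by
    ext i; simp only [mem_Icc, mem_Ico]; omega
  rw [hIcc, prod_congr rfl fun i hi => one_sub_mul_sub_one_div_eq_mul (x := (m : ℝ))
      (Nat.cast_ne_zero.mpr (by have := (mem_Ico.mp hi).1; omega)) (Nat.cast_add_one_ne_zero i),
    prod_mul_distrib, prod_Ico_natCast_div_succ (by omega) (by omega)]
  push_cast
  field_simp

/-- For `2 ≤ m ≤ n` and `m-1 ≤ k ≤ n-1`,
`(∏_{i=k+1}^{n-1} (1 − m(m−1)/((i+1)i))) · m(m−1)/((k+1)k)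
   = m(m−1)/(nk) · ∏_{i=k+1}^{n-1} (i+1−m)(i+m)/i²`. -/
theorem statement1 (n m k : ℕ) (hm : 2 ≤ m) (hmn : m ≤ n)
    (hk1 : m - 1 ≤ k) (hk2 : k ≤ n - 1) :
    (∏ i ∈ Finset.Icc (k + 1) (n - 1),
        (1 - ((m : ℝ) * ((m : ℝ) - 1)) / (((i : ℝ) + 1) * (i : ℝ))))
      * (((m : ℝ) * ((m : ℝ) - 1)) / (((k : ℝ) + 1) * (k : ℝ)))
      = ((m : ℝ) * ((m : ℝ) - 1)) / ((n : ℝ) * (k : ℝ))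
        * ∏ i ∈ Finset.Icc (k + 1) (n - 1),
            (((i : ℝ) + 1 - (m : ℝ)) * ((i : ℝ) + (m : ℝ))) / (i : ℝ) ^ 2 :=
  statement1_general n m k hk2
end

section
/- For all integers m, n with 2 ≤ m ≤ n, one has ∑_{k=m−1}^{n−1} (m(m−1))/(n·k) · ∏_{i=k+1}^{n−1} ((i+1−m)(i+m))/i² = 1; that is, the numbers p^{(m)}_{n,k}, k = m−1, …, n−1, form a probability distribution. -/
/-!
Let `a k = (k / n) ∏_{i=k}^{n-1} (i+1−m)(i+m)/i²`. Since `(k+1)k − (k+1−m)(k+m) = m(m−1)`,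
the `k`-th term of the sum is `a (k+1) − a k`, so the sum telescopes to `a n − a (m−1)`.
Here `a n = 1` (empty product) and `a (m−1) = 0`, because the factor at `i = m−1` vanishes.
-/

open Finset

lemma Nat.Icc_sub_one_right_eq_Ico (a : ℕ) {n : ℕ} (hn : n ≠ 0) : Icc a (n - 1) = Ico a n := by
  ext; simp only [mem_Icc, mem_Ico]; omega

noncomputable def stepFactor (m i : ℕ) : ℝ :=
  ((i + 1 - m) * (i + m)) / (i : ℝ) ^ 2

noncomputable def cumulative (m n k : ℕ) : ℝ :=
  k / n * ∏ i ∈ Ico k n, stepFactor m i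

lemma succ_sub_mul_factor {K : Type*} [Field K] (m k : K) (hk : k ≠ 0) :
    (k + 1) - k * ((k + 1 - m) * (k + m) / k ^ 2) = m * (m - 1) / k := by
  field_simp
  ring

lemma stepFactor_pred_eq_zero {m : ℕ} (hm : 1 ≤ m) : stepFactor m (m - 1) = 0 := by
  simp [stepFactor, Nat.cast_sub hm]

lemma cumulative_self {n : ℕ} (m : ℕ) (hn : n ≠ 0) : cumulative m n n = 1 := by
  simp [cumulative, hn]

lemma cumulative_pred_eq_zero {m n : ℕ} (hm : 1 ≤ m) (hmn : m - 1 < n) :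
    cumulative m n (m - 1) = 0 := by
  rw [cumulative, prod_eq_zero (mem_Ico.2 ⟨le_rfl, hmn⟩) (stepFactor_pred_eq_zero hm), mul_zero]

lemma cumulative_succ_sub {m n k : ℕ} (hk : k ≠ 0) (hkn : k < n) :
    cumulative m n (k + 1) - cumulative m n k
      = (m * (m - 1)) / (n * k) * ∏ i ∈ Ico (k + 1) n, stepFactor m i := by
  have hk' : (k : ℝ) ≠ 0 := Nat.cast_ne_zero.2 hk
  rw [cumulative, cumulative, prod_eq_prod_Ico_succ_bot hkn]
  calc _ = (((k : ℝ) + 1) - k * stepFactor m k) / n * ∏ i ∈ Ico (k + 1) n, stepFactor m i := by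
        push_cast; ring
    _ = _ := by rw [stepFactor, succ_sub_mul_factor _ _ hk', div_div, mul_comm (k : ℝ)]

lemma sum_Ico_stepFactor_eq_one {m n : ℕ} (hm : 2 ≤ m) (hmn : m ≤ n) :
    ∑ k ∈ Ico (m - 1) n, (m * (m - 1)) / (n * k) * ∏ i ∈ Ico (k + 1) n, stepFactor m i
      = 1 := by
  calc _ = ∑ k ∈ Ico (m - 1) n, (cumulative m n (k + 1) - cumulative m n k) :=
        sum_congr rfl fun k hk ↦ by
          rw [mem_Ico] at hk
          exact (cumulative_succ_sub (by omega) hk.2).symm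
    _ = 1 := by
        rw [sum_Ico_sub _ (by omega), cumulative_self m (by omega),
          cumulative_pred_eq_zero (by omega) (by omega), sub_zero]

/-- For `2 ≤ m ≤ n`, the numbers
`p^{(m)}_{n,k} = m(m−1)/(nk) · ∏_{i=k+1}^{n-1} (i+1−m)(i+m)/i²`, for
`k = m−1, …, n−1`, sum up to one. -/
theorem statement2 (m n : ℕ) (hm : 2 ≤ m) (hmn : m ≤ n) :
    ∑ k ∈ Finset.Icc (m - 1) (n - 1),
      ((m : ℝ) * ((m : ℝ) - 1)) / ((n : ℝ) * (k : ℝ))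
        * ∏ i ∈ Finset.Icc (k + 1) (n - 1),
            (((i : ℝ) + 1 - (m : ℝ)) * ((i : ℝ) + (m : ℝ))) / (i : ℝ) ^ 2 = 1 := by
  have hn : n ≠ 0 := by omega
  simp only [Nat.Icc_sub_one_right_eq_Ico _ hn]
  exact sum_Ico_stepFactor_eq_one hm hmn
end

section
/- Fix an integer n ≥ 2. Let T_1, …, T_n be independent random variables with T_i exponentially distributed with rate i, and let K be a random variable with values in {1, …, n−1}, independent of (T_1, …, T_n), with P(K = k) = 2(n+1)/((n−1)(k+2)(k+1)). Set U_n = T_1 + … + T_n and τ^{(n)} = T_{K+1} + … + T_n. Then for all real x ≥ 0 and y ≥ 0, E[exp(−x·U_n − y·τ^{(n)})] = (2(n+1)·b_{n,x+y}/(n−1)) · ∑_{k=1}^{n−1} b_{k,x} / ((k+2)(k+1)·b_{k,x+y}). -/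
/-!
On the event `{K = k}` the exponent is `-∑ aᵢ Tᵢ` with `aᵢ = x` for `i ≤ k` and `aᵢ = x + y` for
`i > k`. As `K` is independent of the `Tᵢ`, the contribution of this event to the expectation is
`P(K = k) · E[exp (-∑ aᵢ Tᵢ)]`, and by independence of the exponential variables the last
expectation is `∏ i / (aᵢ + i) = b_{k,x} b_{n,x+y} / b_{k,x+y}`. Summing over `k` gives the formula.
-/

open MeasureTheory ProbabilityTheory Finset

namespace ProbabilityTheory

variable {r t : ℝ}

lemma exponentialPDF_mul_exp_mul (hr : 0 ≤ r) (ht : t < r) (x : ℝ) :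
    exponentialPDF r x * ENNReal.ofReal (Real.exp (t * x))
      = ENNReal.ofReal (r / (r - t)) * exponentialPDF (r - t) x := by
  rcases lt_or_ge x 0 with hx | hx
  · rw [exponentialPDF_of_neg hx, exponentialPDF_of_neg hx, zero_mul, mul_zero]
  · have hrt : r - t ≠ 0 := (sub_pos.2 ht).ne'
    rw [exponentialPDF_of_nonneg hx, exponentialPDF_of_nonneg hx,
      ← ENNReal.ofReal_mul (by positivity),
      ← ENNReal.ofReal_mul (div_nonneg hr (sub_pos.2 ht).le), mul_assoc, ← Real.exp_add]
    field_simp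
    ring_nf

lemma lintegral_exp_mul_expMeasure (hr : 0 ≤ r) (ht : t < r) :
    ∫⁻ x, ENNReal.ofReal (Real.exp (t * x)) ∂expMeasure r = ENNReal.ofReal (r / (r - t)) := by
  change ∫⁻ x, _ ∂volume.withDensity (exponentialPDF r) = _
  rw [lintegral_withDensity_eq_lintegral_mul _ (f := exponentialPDF r)
    (measurable_exponentialPDFReal r).ennreal_ofReal (by fun_prop)]
  simp_rw [Pi.mul_apply, exponentialPDF_mul_exp_mul hr ht]
  rw [lintegral_const_mul _ (f := exponentialPDF (r - t))
    (measurable_exponentialPDFReal _).ennreal_ofReal,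
    lintegral_exponentialPDF_eq_one (sub_pos.2 ht), mul_one]

lemma integrable_exp_mul_expMeasure (hr : 0 ≤ r) (ht : t < r) :
    Integrable (fun x => Real.exp (t * x)) (expMeasure r) := by
  refine ⟨by fun_prop, ?_⟩
  rw [hasFiniteIntegral_iff_ofReal (ae_of_all _ fun x => (Real.exp_pos _).le),
    lintegral_exp_mul_expMeasure hr ht]
  exact ENNReal.ofReal_lt_top

lemma mgf_id_expMeasure (hr : 0 ≤ r) (ht : t < r) : mgf id (expMeasure r) t = r / (r - t) := by
  rw [mgf, integral_eq_lintegral_of_nonneg_ae (ae_of_all _ fun x => (Real.exp_pos _).le)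
    (by fun_prop)]
  simp only [id]
  rw [lintegral_exp_mul_expMeasure hr ht, ENNReal.toReal_ofReal (div_nonneg hr (sub_pos.2 ht).le)]

variable {Ω ι : Type*} {mΩ : MeasurableSpace Ω} {μ : Measure Ω}

lemma integrable_exp_mul_of_map_eq_expMeasure {X : Ω → ℝ} (hX : AEMeasurable X μ)
    (hlaw : μ.map X = expMeasure r) (hr : 0 ≤ r) (ht : t < r) :
    Integrable (fun ω => Real.exp (t * X ω)) μ := by
  have h := integrable_exp_mul_expMeasure hr ht
  rw [← hlaw] at h
  exact (integrable_map_measure (by fun_prop) hX).1 h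

lemma mgf_of_map_eq_expMeasure {X : Ω → ℝ} (hX : AEMeasurable X μ)
    (hlaw : μ.map X = expMeasure r) (hr : 0 ≤ r) (ht : t < r) : mgf X μ t = r / (r - t) := by
  rw [← mgf_id_map hX, hlaw, mgf_id_expMeasure hr ht]

section WeightedSum

variable {T : ι → Ω → ℝ} {s : Finset ι} {r a : ι → ℝ}

lemma iIndepFun.integrable_exp_neg_sum_mul_of_expMeasure (hind : iIndepFun T μ)
    (hT : ∀ i, Measurable (T i)) (hlaw : ∀ i ∈ s, μ.map (T i) = expMeasure (r i))
    (hr : ∀ i ∈ s, 0 ≤ r i) (ha : ∀ i ∈ s, -r i < a i) :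
    Integrable (fun ω => Real.exp (-∑ i ∈ s, a i * T i ω)) μ := by
  have := hind.isProbabilityMeasure
  have hfactor : ∀ i ∈ s, Integrable (fun ω => Real.exp (-1 * (a i * T i ω))) μ := fun i hi => by
    convert integrable_exp_mul_of_map_eq_expMeasure (hT i).aemeasurable (hlaw i hi) (hr i hi)
      (t := a i * -1) (by linarith [ha i hi]) using 3
    ring
  simpa [Finset.sum_apply] using (hind.comp (fun i x => a i * x) fun i => measurable_const_mul (a i))
    |>.integrable_exp_mul_sum (fun i => (hT i).const_mul (a i)) hfactor

lemma iIndepFun.integral_exp_neg_sum_mul_of_expMeasure (hind : iIndepFun T μ)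
    (hT : ∀ i, Measurable (T i)) (hlaw : ∀ i ∈ s, μ.map (T i) = expMeasure (r i))
    (hr : ∀ i ∈ s, 0 ≤ r i) (ha : ∀ i ∈ s, -r i < a i) :
    ∫ ω, Real.exp (-∑ i ∈ s, a i * T i ω) ∂μ = ∏ i ∈ s, r i / (a i + r i) := by
  have hfactor : ∀ i ∈ s, mgf (fun ω => a i * T i ω) μ (-1) = r i / (a i + r i) := fun i hi => by
    rw [mgf_const_mul, mgf_of_map_eq_expMeasure (hT i).aemeasurable (hlaw i hi) (hr i hi)
      (by linarith [ha i hi])]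
    ring
  have h := (hind.comp (fun i x => a i * x) fun i => measurable_const_mul (a i)).mgf_sum
    (t := -1) (fun i => (hT i).const_mul (a i)) s
  simp only [Function.comp_def] at h
  rw [prod_congr rfl hfactor] at h
  simpa only [mgf, Finset.sum_apply, neg_one_mul] using h

end WeightedSum

lemma IndepFun.setIntegral_preimage_comp {𝓧 𝓨 : Type*} [MeasurableSpace 𝓧] [MeasurableSpace 𝓨]
    {X : Ω → 𝓧} {Y : Ω → 𝓨} (hXY : IndepFun X Y μ) (hX : AEMeasurable X μ) (hY : Measurable Y)
    {f : 𝓧 → ℝ} (hf : AEStronglyMeasurable f (μ.map X)) {B : Set 𝓨} (hB : MeasurableSet B) :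
    ∫ ω in Y ⁻¹' B, f (X ω) ∂μ = μ.real (Y ⁻¹' B) * ∫ ω, f (X ω) ∂μ := by
  have h := hXY.symm.integral_comp_mul_comp hY.aemeasurable hX
    (f := B.indicator 1) (measurable_one.indicator hB).aestronglyMeasurable hf
  calc ∫ ω in Y ⁻¹' B, f (X ω) ∂μ = ∫ ω, (B.indicator (1 : 𝓨 → ℝ) ∘ Y * f ∘ X) ω ∂μ := by
        rw [← integral_indicator (hY hB)]
        congr 1 with ω
        by_cases hω : Y ω ∈ B <;> simp [hω]
    _ = μ.real (Y ⁻¹' B) * ∫ ω, f (X ω) ∂μ := by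
        rw [h, ← integral_indicator_one (hY hB)]
        rfl

lemma IndepFun.integral_comp_eq_sum {𝓧 κ : Type*} [MeasurableSpace 𝓧] [MeasurableSpace κ]
    [MeasurableSingletonClass κ] {X : Ω → 𝓧} {K : Ω → κ} (hXK : IndepFun X K μ)
    (hX : AEMeasurable X μ) (hK : Measurable K) {S : Finset κ} (hKS : ∀ ω, K ω ∈ S)
    {G : κ → 𝓧 → ℝ} (hG : ∀ k ∈ S, AEStronglyMeasurable (G k) (μ.map X))
    (hGint : ∀ k ∈ S, Integrable (fun ω => G k (X ω)) μ) :
    ∫ ω, G (K ω) (X ω) ∂μ = ∑ k ∈ S, μ.real (K ⁻¹' {k}) * ∫ ω, G k (X ω) ∂μ := by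
  have hpoint : ∀ ω, G (K ω) (X ω) = ∑ k ∈ S, (K ⁻¹' {k}).indicator (fun ω => G k (X ω)) ω :=
    fun ω => by
      rw [sum_eq_single_of_mem (K ω) (hKS ω) fun k _ hk =>
        Set.indicator_of_notMem (fun h => hk h.symm) _,
        Set.indicator_of_mem (s := K ⁻¹' {K ω}) rfl]
  rw [integral_congr_ae (ae_of_all _ hpoint),
    integral_finsetSum _ fun k hk => (hGint k hk).indicator (hK (measurableSet_singleton k))]
  refine sum_congr rfl fun k hk => ?_
  rw [integral_indicator (hK (measurableSet_singleton k)),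
    hXK.setIntegral_preimage_comp hX hK (hG k hk) (measurableSet_singleton k)]

end ProbabilityTheory

lemma Finset.sum_Icc_one_eq_sum_fin {M : Type*} [AddCommMonoid M] (f : ℕ → M) (n : ℕ) :
    ∑ i ∈ Icc 1 n, f i = ∑ j : Fin n, f (j + 1) := by
  rw [Fin.sum_univ_eq_sum_range (fun j => f (j + 1)), range_eq_Ico, sum_Ico_add']
  rfl

lemma sum_add_ite_lt_mul (x y : ℝ) (k n : ℕ) (f : ℕ → ℝ) :
    ∑ i ∈ Icc 1 n, (x + if k < i then y else 0) * f i
      = x * ∑ i ∈ Icc 1 n, f i + y * ∑ i ∈ Icc (k + 1) n, f i := by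
  have hfilter : (Icc 1 n).filter (k < ·) = Icc (k + 1) n := by
    ext i; simp only [mem_filter, mem_Icc]; omega
  simp only [add_mul, sum_add_distrib, ← mul_sum, ite_mul, zero_mul, ← sum_filter, hfilter]

/-- `b_{k,x}` in the notation of the paper. -/
noncomputable def yuleCoeff (k : ℕ) (x : ℝ) : ℝ := ∏ i ∈ Icc 1 k, (i : ℝ) / (x + i)

lemma yuleCoeff_pos {x : ℝ} (hx : -1 < x) (k : ℕ) : 0 < yuleCoeff k x := by
  refine prod_pos fun i hi => ?_
  have hi1 : (1 : ℝ) ≤ i := by exact_mod_cast (mem_Icc.1 hi).1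
  exact div_pos (by linarith) (by linarith)

lemma Finset.prod_Icc_one_eq_mul_prod_Ioc {M : Type*} [CommMonoid M] (f : ℕ → M) {k n : ℕ}
    (hkn : k ≤ n) : ∏ i ∈ Icc 1 n, f i = (∏ i ∈ Icc 1 k, f i) * ∏ i ∈ Ioc k n, f i := by
  have hIcc : ∀ m, Icc 1 m = Ioc 0 m := fun m => by rw [← Icc_add_one_left_eq_Ioc, zero_add]
  rw [hIcc, hIcc, prod_Ioc_consecutive f (Nat.zero_le k) hkn]

lemma yuleCoeff_eq_mul_prod_Ioc (x : ℝ) {k n : ℕ} (hkn : k ≤ n) :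
    yuleCoeff n x = yuleCoeff k x * ∏ i ∈ Ioc k n, (i : ℝ) / (x + i) :=
  prod_Icc_one_eq_mul_prod_Ioc _ hkn

lemma prod_div_add_ite_lt_eq_yuleCoeff {x y : ℝ} (hxy : -1 < x + y) {k n : ℕ} (hkn : k ≤ n) :
    ∏ i ∈ Icc 1 n, (i : ℝ) / ((x + if k < i then y else 0) + i)
      = yuleCoeff k x * yuleCoeff n (x + y) / yuleCoeff k (x + y) := by
  have hlow : ∏ i ∈ Icc 1 k, (i : ℝ) / ((x + if k < i then y else 0) + i) = yuleCoeff k x :=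
    prod_congr rfl fun i hi => by rw [if_neg (by simp only [mem_Icc] at hi; omega), add_zero]
  have hhigh : ∏ i ∈ Ioc k n, (i : ℝ) / ((x + if k < i then y else 0) + i)
      = ∏ i ∈ Ioc k n, (i : ℝ) / (x + y + i) :=
    prod_congr rfl fun i hi => by rw [if_pos (mem_Ioc.1 hi).1]
  rw [eq_div_iff (yuleCoeff_pos hxy k).ne', prod_Icc_one_eq_mul_prod_Ioc _ hkn, hlow,
    hhigh, yuleCoeff_eq_mul_prod_Ioc (x + y) hkn]
  ring

theorem statement5_general {Ω : Type*} [MeasureSpace Ω] [IsProbabilityMeasure (ℙ : Measure Ω)]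
    (n : ℕ) (T : ℕ → Ω → ℝ) (K : Ω → ℕ)
    (hTmeas : ∀ i, Measurable (T i))
    (hTindep : iIndepFun T ℙ)
    (hTexp : ∀ i ∈ Finset.Icc 1 n, Measure.map (T i) ℙ = expMeasure i)
    (hKmeas : Measurable K)
    (hKrange : ∀ ω, K ω ∈ Finset.Icc 1 (n - 1))
    (hKindep : IndepFun (fun ω (i : Fin n) => T (i + 1) ω) K ℙ)
    (hKdist : ∀ k ∈ Finset.Icc 1 (n - 1),
      ℙ {ω | K ω = k} = ENNReal.ofReal
        (2 * ((n : ℝ) + 1) / (((n : ℝ) - 1) * ((k : ℝ) + 2) * ((k : ℝ) + 1))))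
    (x y : ℝ) (hx : 0 ≤ x) (hy : 0 ≤ y) :
    ∫ ω, Real.exp (-x * ∑ i ∈ Finset.Icc 1 n, T i ω
        - y * ∑ i ∈ Finset.Icc (K ω + 1) n, T i ω) ∂ℙ
      = 2 * ((n : ℝ) + 1) * (∏ i ∈ Finset.Icc 1 n, (i : ℝ) / (x + y + i)) / ((n : ℝ) - 1)
        * ∑ k ∈ Finset.Icc 1 (n - 1),
            (∏ i ∈ Finset.Icc 1 k, (i : ℝ) / (x + i))
              / (((k : ℝ) + 2) * ((k : ℝ) + 1) * ∏ i ∈ Finset.Icc 1 k, (i : ℝ) / (x + y + i)) := by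
  set p : ℕ → ℝ := fun k => 2 * ((n : ℝ) + 1) / (((n : ℝ) - 1) * ((k : ℝ) + 2) * ((k : ℝ) + 1))
  set a : ℕ → ℕ → ℝ := fun k i => x + if k < i then y else 0
  -- `hKindep` only concerns the vector `(T 1, …, T n)`, so the integrand on `{K = k}` is
  -- written as a function `F k` of that vector.
  set X : Ω → Fin n → ℝ := fun ω i => T (i + 1) ω
  set F : ℕ → (Fin n → ℝ) → ℝ := fun k v => Real.exp (-∑ j : Fin n, a k (j + 1) * v j)
  have hFX : ∀ k ω, F k (X ω) = Real.exp (-∑ i ∈ Icc 1 n, a k i * T i ω) := fun k ω => by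
    rw [sum_Icc_one_eq_sum_fin]
  have hrate : ∀ k, ∀ i ∈ Icc 1 n, -(i : ℝ) < a k i := fun k i hi => by
    have : (1 : ℝ) ≤ i := by exact_mod_cast (mem_Icc.1 hi).1
    simp only [a]; split_ifs <;> linarith
  have hlaplace : ∀ k, ∫ ω, F k (X ω) ∂ℙ = ∏ i ∈ Icc 1 n, (i : ℝ) / (a k i + i) := fun k => by
    simp only [hFX]
    exact hTindep.integral_exp_neg_sum_mul_of_expMeasure hTmeas hTexp (fun i _ => i.cast_nonneg)
      (hrate k)
  have hint : ∀ k, Integrable (fun ω => F k (X ω)) ℙ := fun k => by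
    simp only [hFX]
    exact hTindep.integrable_exp_neg_sum_mul_of_expMeasure hTmeas hTexp
      (fun i _ => i.cast_nonneg) (hrate k)
  have hprob : ∀ k ∈ Icc 1 (n - 1), (ℙ : Measure Ω).real (K ⁻¹' {k}) = p k := fun k hk => by
    have hn1 : (0 : ℝ) < n - 1 := by
      rw [sub_pos]; exact_mod_cast (by grind : 1 < n)
    change ((ℙ : Measure Ω) {ω | K ω = k}).toReal = p k
    rw [hKdist k hk, ENNReal.toReal_ofReal]
    positivity
  have hexponent : ∀ ω, Real.exp (-x * ∑ i ∈ Icc 1 n, T i ω - y * ∑ i ∈ Icc (K ω + 1) n, T i ω)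
      = F (K ω) (X ω) := fun ω => by
    rw [hFX, sum_add_ite_lt_mul]
    ring_nf
  rw [integral_congr_ae (ae_of_all _ hexponent), hKindep.integral_comp_eq_sum
    (measurable_pi_lambda _ fun i => hTmeas _).aemeasurable hKmeas hKrange
    (fun k _ => by fun_prop) (fun k _ => hint k), mul_sum]
  refine sum_congr rfl fun k hk => ?_
  obtain ⟨hk1, hkn⟩ := mem_Icc.1 hk
  have hn1 : (n : ℝ) - 1 ≠ 0 := by
    rw [sub_ne_zero]; exact_mod_cast (by omega : n ≠ 1)
  have hb : ∏ i ∈ Icc 1 k, (i : ℝ) / (x + y + i) ≠ 0 := (yuleCoeff_pos (by linarith) k).ne'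
  rw [hprob k hk, hlaplace, prod_div_add_ite_lt_eq_yuleCoeff (by linarith) (by omega)]
  simp only [yuleCoeff, p]
  field_simp

/-- Joint Laplace transform of the height `U_n` of the Yule `n`-tree and of the
time `τ⁽ⁿ⁾ = T_{K+1} + … + T_n` to the most recent common ancestor of two
randomly sampled tips:
`E[e^{−x·U_n − y·τ⁽ⁿ⁾}] = (2(n+1) b_{n,x+y}/(n−1)) ∑_{k=1}^{n−1} b_{k,x}/((k+2)(k+1) b_{k,x+y})`,
where `b_{k,x} = ∏_{i=1}^k i/(x+i)`. -/
theorem statement5 {Ω : Type*} [MeasureSpace Ω] [IsProbabilityMeasure (ℙ : Measure Ω)]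
    (n : ℕ) (hn : 2 ≤ n) (T : ℕ → Ω → ℝ) (K : Ω → ℕ)
    (hTmeas : ∀ i, Measurable (T i))
    (hTindep : iIndepFun T ℙ)
    (hTexp : ∀ i ∈ Finset.Icc 1 n, Measure.map (T i) ℙ = expMeasure i)
    (hKmeas : Measurable K)
    (hKrange : ∀ ω, K ω ∈ Finset.Icc 1 (n - 1))
    (hKindep : IndepFun (fun ω (i : Fin n) => T (i + 1) ω) K ℙ)
    (hKdist : ∀ k ∈ Finset.Icc 1 (n - 1),
      ℙ {ω | K ω = k} = ENNReal.ofReal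
        (2 * ((n : ℝ) + 1) / (((n : ℝ) - 1) * ((k : ℝ) + 2) * ((k : ℝ) + 1))))
    (x y : ℝ) (hx : 0 ≤ x) (hy : 0 ≤ y) :
    ∫ ω, Real.exp (-x * ∑ i ∈ Finset.Icc 1 n, T i ω
        - y * ∑ i ∈ Finset.Icc (K ω + 1) n, T i ω) ∂ℙ
      = 2 * ((n : ℝ) + 1) * (∏ i ∈ Finset.Icc 1 n, (i : ℝ) / (x + y + i)) / ((n : ℝ) - 1)
        * ∑ k ∈ Finset.Icc 1 (n - 1),
            (∏ i ∈ Finset.Icc 1 k, (i : ℝ) / (x + i))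
              / (((k : ℝ) + 2) * ((k : ℝ) + 1) * ∏ i ∈ Finset.Icc 1 k, (i : ℝ) / (x + y + i)) :=
  statement5_general n T K hTmeas hTindep hTexp hKmeas hKrange hKindep hKdist x y hx hy
end

section
/- For each integer n ≥ 2, let T_1, …, T_n be independent random variables with T_i exponentially distributed with rate i, and let K be an independent random index in {1, …, n−1} with P(K = k) = 2(n+1)/((n−1)(k+2)(k+1)); set U_n = T_1 + … + T_n and τ^{(n)} = T_{K+1} + … + T_n. Then for all reals x > 0 and y > 1, lim_{n→∞} n^{x+1} · E[exp(−x·U_n − y·τ^{(n)})] = 2·Γ(x+1)/(y−1). -/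
/-!
Conditionally on `K = k`, `x U_n + y τ⁽ⁿ⁾ = ∑ᵢ cᵢ Tᵢ` with `cᵢ = x` for `i ≤ k` and `cᵢ = x + y`
for `i > k`. Since `E[e^{-c Tᵢ}] = i / (i + c)`, independence gives
`E[e^{-x U_n - y τ⁽ⁿ⁾}] = ∑ₖ P(K = k) Pₓ(k) P_{x+y}(n) / P_{x+y}(k)` with
`Pₛ(m) = ∏_{i ≤ m} i / (i + s) ~ Γ(s + 1) m^{-s}` (Gauss's product formula for `Γ`).
The `k`-th term is of order `P_{x+y}(n) k^{y-2}`, and Stolz–Cesàro turns the sum over `k < n`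
into `n^{y-1} / (y - 1)`.
-/

open MeasureTheory ProbabilityTheory Filter Topology Finset Real Asymptotics
open scoped ENNReal

-- `E[exp (-s (T₁ + ⋯ + Tₘ))]` for independent `Tᵢ ~ Exp(i)`, written `Pₛ(m)` above.
noncomputable def laplaceProd (s : ℝ) (m : ℕ) : ℝ := ∏ i ∈ Icc 1 m, (i : ℝ) / (i + s)

lemma laplaceProd_pos {s : ℝ} (hs : -1 < s) (m : ℕ) : 0 < laplaceProd s m :=
  prod_pos fun i hi => by
    have : (1 : ℝ) ≤ i := by exact_mod_cast (mem_Icc.1 hi).1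
    exact div_pos (by linarith) (by linarith)

lemma prod_Ioc_div_add_eq_laplaceProd_div {s : ℝ} (hs : -1 < s) {k n : ℕ} (hkn : k ≤ n) :
    ∏ i ∈ Ioc k n, (i : ℝ) / (i + s) = laplaceProd s n / laplaceProd s k := by
  rw [eq_div_iff (laplaceProd_pos hs k).ne', mul_comm, laplaceProd, laplaceProd,
    ← zero_add 1, Icc_add_one_left_eq_Ioc, Icc_add_one_left_eq_Ioc]
  exact prod_Ioc_consecutive _ k.zero_le hkn

lemma tendsto_rpow_mul_laplaceProd {s : ℝ} (hs : 0 < s) :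
    Tendsto (fun n : ℕ => (n : ℝ) ^ s * laplaceProd s n) atTop (𝓝 (Gamma (s + 1))) := by
  rw [Gamma_add_one hs.ne']
  refine ((GammaSeq_tendsto_Gamma s).const_mul s).congr' ?_
  filter_upwards [eventually_ge_atTop 1] with n hn
  have hdenom : ∏ i ∈ Icc 1 n, ((i : ℝ) + s) = ∏ j ∈ range n, (s + ((j : ℝ) + 1)) := by
    rw [← Ico_add_one_right_eq_Icc, prod_Ico_eq_prod_range]
    simp [add_comm]
  have hfactorial : ∏ i ∈ Icc 1 n, (i : ℝ) = (n.factorial : ℝ) := by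
    rw [← Nat.cast_prod, ← Ico_add_one_right_eq_Icc, prod_Ico_id_eq_factorial]
  have hshift : ∏ j ∈ range (n + 1), (s + (j : ℝ)) = (∏ j ∈ range n, (s + ((j : ℝ) + 1))) * s := by
    rw [prod_range_succ']
    simp only [Nat.cast_succ, Nat.cast_zero, add_zero]
  have : ∏ j ∈ range n, (s + ((j : ℝ) + 1)) ≠ 0 := prod_ne_zero_iff.2 fun j _ => by positivity
  rw [GammaSeq, laplaceProd, prod_div_distrib, hdenom, hfactorial, hshift]
  field_simp

lemma tendsto_sum_range_div_sum_range {f g : ℕ → ℝ} {l : ℝ} (hg : ∀ n, 0 < g n)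
    (hg_sum : Tendsto (fun n => ∑ i ∈ range n, g i) atTop atTop)
    (h : Tendsto (fun n => f n / g n) atTop (𝓝 l)) :
    Tendsto (fun n => (∑ i ∈ range n, f i) / ∑ i ∈ range n, g i) atTop (𝓝 l) := by
  have hlittle : (fun n => f n - l * g n) =o[atTop] g := by
    refine (isLittleO_iff_tendsto fun n h => absurd h (hg n).ne').2 ?_
    simpa using (h.sub_const l).congr fun n => by field_simp [(hg n).ne']
  have hsum := (hlittle.sum_range (fun n => (hg n).le) hg_sum).tendsto_div_nhds_zero
  simpa using (hsum.const_add l).congr' <| (hg_sum.eventually_gt_atTop 0).mono fun n hn => by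
    simp only [sum_sub_distrib, ← mul_sum]
    field_simp
    ring

lemma tendsto_add_one_rpow_sub_rpow_div (p : ℝ) :
    Tendsto (fun k : ℕ => (((k : ℝ) + 1) ^ p - (k : ℝ) ^ p) / (k : ℝ) ^ (p - 1)) atTop
      (𝓝 p) := by
  -- the difference quotient of `t ↦ (1 + t) ^ p` at `0`, taken at `t = 1 / k`
  have hderiv : HasDerivAt (fun t : ℝ => (1 + t) ^ p) p 0 := by
    simpa using ((hasDerivAt_id (0 : ℝ)).const_add 1).rpow_const (p := p) (by simp)
  have hinv : Tendsto (fun k : ℕ => (k : ℝ)⁻¹) atTop (𝓝[≠] 0) :=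
    tendsto_nhdsWithin_of_tendsto_nhds_of_eventually_within _
      (tendsto_inv_atTop_zero.comp tendsto_natCast_atTop_atTop)
      ((eventually_ne_atTop 0).mono fun k hk => by simpa using hk)
  refine ((hasDerivAt_iff_tendsto_slope.1 hderiv).comp hinv).congr' ?_
  filter_upwards [eventually_ne_atTop 0] with k hk
  have hk : (0 : ℝ) < k := by positivity
  rw [Function.comp_apply, slope_def_field, rpow_sub_one hk.ne', add_zero, one_rpow,
    show 1 + (k : ℝ)⁻¹ = (k + 1) / k by field_simp, div_rpow (by positivity) hk.le]
  have : (k : ℝ) ^ p ≠ 0 := (rpow_pos_of_pos hk p).ne'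
  field_simp
  ring

lemma tendsto_sum_range_div_rpow {e : ℕ → ℝ} {L p : ℝ} (hp : 0 < p)
    (h : Tendsto (fun k : ℕ => e k / (k : ℝ) ^ (p - 1)) atTop (𝓝 L)) :
    Tendsto (fun n : ℕ => (∑ k ∈ range n, e k) / (n : ℝ) ^ p) atTop (𝓝 (L / p)) := by
  have hincr : ∀ k : ℕ, 0 < ((k : ℝ) + 1) ^ p - (k : ℝ) ^ p := fun k =>
    sub_pos.2 (rpow_lt_rpow k.cast_nonneg (lt_add_one _) hp)
  have htelescope :
      ∀ n : ℕ, ∑ k ∈ range n, (((k : ℝ) + 1) ^ p - (k : ℝ) ^ p) = (n : ℝ) ^ p := fun n => by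
    simpa [zero_rpow hp.ne'] using sum_range_sub (fun k : ℕ => (k : ℝ) ^ p) n
  have hratio := h.div (tendsto_add_one_rpow_sub_rpow_div p) hp.ne'
  refine (tendsto_sum_range_div_sum_range (f := e) hincr ?_ (hratio.congr' ?_)).congr
    fun n => ?_
  · simpa only [htelescope, Function.comp_def] using
      (tendsto_rpow_atTop hp).comp tendsto_natCast_atTop_atTop
  · filter_upwards [eventually_ne_atTop 0] with k hk
    have : (k : ℝ) ^ (p - 1) ≠ 0 := (rpow_pos_of_pos (by positivity) _).ne'
    simp only [Pi.div_apply]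
    field_simp
  · rw [htelescope]

lemma tendsto_laplaceProd_div_laplaceProd_mul_rpow {s t : ℝ} (hs : 0 < s) (ht : 0 < t) :
    Tendsto (fun k : ℕ => laplaceProd s k / (laplaceProd t k * (k : ℝ) ^ (t - s))) atTop
      (𝓝 (Gamma (s + 1) / Gamma (t + 1))) := by
  refine ((tendsto_rpow_mul_laplaceProd hs).div (tendsto_rpow_mul_laplaceProd ht)
    (Gamma_pos_of_pos (by linarith)).ne').congr' ?_
  filter_upwards [eventually_gt_atTop 0] with k hk
  have hk : (0 : ℝ) < k := by exact_mod_cast hk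
  have := (rpow_pos_of_pos hk s).ne'
  have := (laplaceProd_pos (by linarith : -1 < t) k).ne'
  rw [Pi.div_apply, show (k : ℝ) ^ t = (k : ℝ) ^ s * (k : ℝ) ^ (t - s) by
    rw [← rpow_add hk]; ring_nf]
  field_simp

lemma tendsto_add_one_div_sub_one :
    Tendsto (fun n : ℕ => ((n : ℝ) + 1) / ((n : ℝ) - 1)) atTop (𝓝 1) := by
  have hvanish : Tendsto (fun n : ℕ => 2 / ((n : ℝ) - 1)) atTop (𝓝 0) :=
    tendsto_const_nhds.div_atTop
      (tendsto_atTop_add_const_right _ (-1) tendsto_natCast_atTop_atTop)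
  simpa using (hvanish.const_add 1).congr' <| (eventually_ge_atTop 2).mono fun n hn => by
    have : (2 : ℝ) ≤ n := by exact_mod_cast hn
    have : (n : ℝ) - 1 ≠ 0 := by linarith
    field_simp
    ring

lemma tendsto_rpow_mul_sum_laplaceProd {x y : ℝ} (hx : 0 < x) (hy : 1 < y) :
    Tendsto (fun n : ℕ => (n : ℝ) ^ (x + 1) * ∑ k ∈ Icc 1 (n - 1),
        2 * ((n : ℝ) + 1) / (((n : ℝ) - 1) * ((k : ℝ) + 2) * ((k : ℝ) + 1)) *
          (laplaceProd x k * (laplaceProd (x + y) n / laplaceProd (x + y) k)))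
      atTop (𝓝 (2 * Gamma (x + 1) / (y - 1))) := by
  have hxy : 0 < x + y := by linarith
  -- the `k`-th summand, with the factor `2 (n + 1) / (n - 1) · P_{x+y}(n)` pulled out
  set e : ℕ → ℝ := fun k =>
    laplaceProd x k / (laplaceProd (x + y) k * (((k : ℝ) + 2) * ((k : ℝ) + 1)))
  set L := Gamma (x + 1) / Gamma (x + y + 1)
  have he : Tendsto (fun k : ℕ => e k / (k : ℝ) ^ (y - 1 - 1)) atTop (𝓝 L) := by
    have hquad :
        Tendsto (fun k : ℕ => (k : ℝ) ^ (2 : ℝ) / (((k : ℝ) + 2) * ((k : ℝ) + 1))) atTop (𝓝 1) := by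
      simpa [div_mul_div_comm, ← sq] using
        (tendsto_natCast_div_add_atTop (2 : ℝ)).mul (tendsto_natCast_div_add_atTop (1 : ℝ))
    refine (by simpa using (tendsto_laplaceProd_div_laplaceProd_mul_rpow hx hxy).mul hquad :
      Tendsto _ atTop (𝓝 L)).congr' ?_
    filter_upwards [eventually_gt_atTop 0] with k hk
    have hk : (0 : ℝ) < k := by exact_mod_cast hk
    have := (rpow_pos_of_pos hk (y - 1 - 1)).ne'
    have := (laplaceProd_pos (by linarith : -1 < x + y) k).ne'
    rw [show (k : ℝ) ^ y = (k : ℝ) ^ (y - 1 - 1) * (k : ℝ) ^ 2 by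
      rw [← rpow_natCast, ← rpow_add hk]; push_cast; ring_nf]
    simp only [e]
    field_simp
  have hsum : Tendsto (fun n : ℕ => (∑ k ∈ Icc 1 (n - 1), e k) / (n : ℝ) ^ (y - 1))
      atTop (𝓝 (L / (y - 1))) := by
    have hfirst : Tendsto (fun n : ℕ => e 0 / (n : ℝ) ^ (y - 1)) atTop (𝓝 0) :=
      tendsto_const_nhds.div_atTop
        ((tendsto_rpow_atTop (by linarith)).comp tendsto_natCast_atTop_atTop)
    simpa using ((tendsto_sum_range_div_rpow (by linarith) he).sub hfirst).congr' <|
      (eventually_gt_atTop 0).mono fun n hn => by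
        rw [sum_range_eq_add_Ico _ hn, show Icc 1 (n - 1) = Ico 1 n by ext; simp; omega]
        ring
  have hlim : 2 * 1 * Gamma (x + y + 1) * (L / (y - 1)) = 2 * Gamma (x + 1) / (y - 1) := by
    have := (Gamma_pos_of_pos (by linarith : 0 < x + y + 1)).ne'
    simp only [L]
    field_simp
  rw [← hlim]
  refine (((tendsto_add_one_div_sub_one.const_mul 2).mul
    (tendsto_rpow_mul_laplaceProd hxy)).mul hsum).congr' ?_
  filter_upwards [eventually_ge_atTop 2] with n hn
  have hn : (2 : ℝ) ≤ n := by exact_mod_cast hn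
  have : (n : ℝ) - 1 ≠ 0 := by linarith
  have : (n : ℝ) ^ (y - 1) ≠ 0 := (rpow_pos_of_pos (by linarith) _).ne'
  simp only [sum_div, mul_sum]
  refine sum_congr rfl fun k _ => ?_
  have := (laplaceProd_pos (by linarith : -1 < x + y) k).ne'
  rw [show (n : ℝ) ^ (x + y) = (n : ℝ) ^ (x + 1) * (n : ℝ) ^ (y - 1) by
    rw [← rpow_add (by linarith)]; ring_nf]
  simp only [e]
  field_simp

lemma integral_exp_neg_mul_expMeasure {r c : ℝ} (hr : 0 < r) (hrc : 0 < r + c) :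
    ∫ t, exp (-c * t) ∂expMeasure r = r / (r + c) := by
  have hdensity : ∀ t : ℝ, (exponentialPDFReal r t).toNNReal • exp (-c * t)
      = (Set.Ici 0).indicator (fun t => r * exp (-((r + c) * t))) t := by
    intro t
    rw [NNReal.smul_def, smul_eq_mul, Real.coe_toNNReal _ (exponentialPDFReal_nonneg hr t),
      exponentialPDFReal, gammaPDFReal]
    simp only [rpow_one, Gamma_one, div_one, sub_self, rpow_zero, mul_one]
    split_ifs with ht
    · rw [Set.indicator_of_mem (Set.mem_Ici.2 ht), mul_assoc, ← exp_add]
      ring_nf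
    · rw [Set.indicator_of_notMem (by simpa using ht), zero_mul]
  rw [show expMeasure r =
      volume.withDensity fun t => ((exponentialPDFReal r t).toNNReal : ℝ≥0∞) from rfl,
    integral_withDensity_eq_integral_smul (measurable_exponentialPDFReal r).real_toNNReal]
  simp_rw [hdensity]
  rw [integral_indicator measurableSet_Ici, integral_Ici_eq_integral_Ioi, integral_const_mul]
  have h := integral_rpow_mul_exp_neg_mul_Ioi one_pos hrc
  simp only [sub_self, rpow_zero, one_mul, rpow_one, Gamma_one, mul_one] at h
  rw [h]
  field_simp

lemma integral_exp_neg_mul_of_map_eq_expMeasure {Ω : Type*} [MeasurableSpace Ω] {μ : Measure Ω}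
    {X : Ω → ℝ} (hX : Measurable X) {r c : ℝ} (hXr : μ.map X = expMeasure r) (hr : 0 < r)
    (hrc : 0 < r + c) : ∫ ω, exp (-c * X ω) ∂μ = r / (r + c) := by
  rw [← integral_exp_neg_mul_expMeasure hr hrc, ← hXr,
    integral_map hX.aemeasurable (by fun_prop)]

lemma ProbabilityTheory.iIndepFun.integral_exp_neg_sum_mul {Ω ι : Type*} [MeasurableSpace Ω]
    {μ : Measure Ω} {T : ι → Ω → ℝ} (hT : ∀ i, Measurable (T i)) (hTi : iIndepFun T μ)
    {s : Finset ι} {r c : ι → ℝ} (hTr : ∀ i ∈ s, μ.map (T i) = expMeasure (r i))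
    (hr : ∀ i ∈ s, 0 < r i) (hrc : ∀ i ∈ s, 0 < r i + c i) :
    Integrable (fun ω => exp (-∑ i ∈ s, c i * T i ω)) μ ∧
      ∫ ω, exp (-∑ i ∈ s, c i * T i ω) ∂μ = ∏ i ∈ s, r i / (r i + c i) := by
  have := hTi.isProbabilityMeasure
  set X : ι → Ω → ℝ := fun i ω => c i * T i ω
  have hX : ∀ i, Measurable (X i) := fun i => (hT i).const_mul _
  have hXi : iIndepFun X μ := hTi.comp (fun i t => c i * t) fun i => measurable_const_mul _
  have hsum : ∀ ω, -∑ i ∈ s, c i * T i ω = -1 * (∑ i ∈ s, X i) ω := by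
    intro ω; simp [X, Finset.sum_apply]
  have hfactor : ∀ i ∈ s, ∫ ω, exp (-1 * X i ω) ∂μ = r i / (r i + c i) := fun i hi => by
    simpa [X, neg_mul, mul_comm] using
      integral_exp_neg_mul_of_map_eq_expMeasure (hT i) (hTr i hi) (hr i hi) (hrc i hi)
  simp_rw [hsum]
  refine ⟨hXi.integrable_exp_mul_sum hX fun i hi => ?_, ?_⟩
  · refine Integrable.of_integral_ne_zero ?_
    rw [hfactor i hi]
    exact (div_pos (hr i hi) (hrc i hi)).ne'
  · rw [← mgf, hXi.mgf_sum hX]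
    exact prod_congr rfl hfactor

lemma ProbabilityTheory.IndepFun.integral_comp_eq_sum_s13 {Ω E κ : Type*} [MeasurableSpace Ω]
    {μ : Measure Ω} [MeasurableSpace E] [MeasurableSpace κ] [MeasurableSingletonClass κ]
    {V : Ω → E} {K : Ω → κ} {s : Finset κ} {G : κ → E → ℝ}
    (hVK : IndepFun V K μ) (hK : Measurable K) (hKs : ∀ ω, K ω ∈ s)
    (hG : ∀ k, Measurable (G k)) (hGV : ∀ k ∈ s, Integrable (fun ω => G k (V ω)) μ) :
    ∫ ω, G (K ω) (V ω) ∂μ = ∑ k ∈ s, μ.real {ω | K ω = k} * ∫ ω, G k (V ω) ∂μ := by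
  classical
  set χ : κ → Ω → ℝ := fun k ω => ({k} : Set κ).indicator 1 (K ω)
  have hχ : ∀ k, Measurable (χ k) := fun k =>
    (measurable_one.indicator (measurableSet_singleton k)).comp hK
  have hdecomp : ∀ ω, G (K ω) (V ω) = ∑ k ∈ s, χ k ω * G k (V ω) := fun ω => by
    simp [χ, Set.indicator_apply, hKs ω]
  have hpiece : ∀ k ∈ s, Integrable (fun ω => χ k ω * G k (V ω)) μ := fun k hk =>
    (hGV k hk).bdd_mul (hχ k).aestronglyMeasurable (c := 1) (Eventually.of_forall fun ω => by
      simp only [χ, Set.indicator_apply]; split_ifs <;> simp)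
  simp_rw [hdecomp]
  rw [integral_finsetSum s hpiece]
  refine sum_congr rfl fun k hk => ?_
  have hind : IndepFun (χ k) (fun ω => G k (V ω)) μ :=
    (hVK.comp (hG k) (measurable_one.indicator (measurableSet_singleton k))).symm
  rw [show (fun ω => χ k ω * G k (V ω)) = χ k * fun ω => G k (V ω) from rfl,
    hind.integral_mul_eq_mul_integral (hχ k).aestronglyMeasurable
      (hGV k hk).aestronglyMeasurable]
  congr 1
  rw [show χ k = (K ⁻¹' {k}).indicator 1 from rfl,
    integral_indicator_one (hK (measurableSet_singleton k))]
  rfl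

lemma sum_Icc_mul_add_ite (f : ℕ → ℝ) (x y : ℝ) (k n : ℕ) :
    ∑ i ∈ Icc 1 n, (x + if k < i then y else 0) * f i
      = x * ∑ i ∈ Icc 1 n, f i + y * ∑ i ∈ Icc (k + 1) n, f i := by
  have hfilter : (Icc 1 n).filter (k < ·) = Icc (k + 1) n := by
    ext i; simp only [mem_filter, mem_Icc]; omega
  simp only [add_mul, ite_mul, zero_mul, sum_add_distrib, ← sum_filter, hfilter, mul_sum]

lemma prod_Icc_div_add_ite {x y : ℝ} (hxy : -1 < x + y) {k n : ℕ} (hkn : k ≤ n) :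
    ∏ i ∈ Icc 1 n, (i : ℝ) / (i + (x + if k < i then y else 0))
      = laplaceProd x k * (laplaceProd (x + y) n / laplaceProd (x + y) k) := by
  rw [← prod_Ioc_div_add_eq_laplaceProd_div hxy hkn, laplaceProd, ← zero_add 1,
    Icc_add_one_left_eq_Ioc, Icc_add_one_left_eq_Ioc, ← prod_Ioc_consecutive _ k.zero_le hkn]
  congr 1
  · refine prod_congr rfl fun i hi => ?_
    rw [if_neg (mem_Ioc.1 hi).2.not_gt, add_zero]
  · refine prod_congr rfl fun i hi => ?_
    rw [if_pos (mem_Ioc.1 hi).1]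

lemma integral_exp_neg_height_sub_mrca {Ω : Type*} [MeasurableSpace Ω] {μ : Measure Ω}
    {T : ℕ → Ω → ℝ} {K : Ω → ℕ} {n : ℕ} (hT : ∀ i, Measurable (T i)) (hTi : iIndepFun T μ)
    (hTexp : ∀ i ∈ Icc 1 n, μ.map (T i) = expMeasure i) (hK : Measurable K)
    (hKrange : ∀ ω, K ω ∈ Icc 1 (n - 1))
    (hKindep : IndepFun (fun ω (i : Fin n) => T (i + 1) ω) K μ)
    {x y : ℝ} (hx : -1 < x) (hxy : -1 < x + y) :
    ∫ ω, exp (-x * ∑ i ∈ Icc 1 n, T i ω - y * ∑ i ∈ Icc (K ω + 1) n, T i ω) ∂μ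
      = ∑ k ∈ Icc 1 (n - 1),
          μ.real {ω | K ω = k} *
            (laplaceProd x k * (laplaceProd (x + y) n / laplaceProd (x + y) k)) := by
  set c : ℕ → ℕ → ℝ := fun k i => x + if k < i then y else 0
  have hc : ∀ k ∈ Icc 1 (n - 1), ∀ i ∈ Icc 1 n, 0 < (i : ℝ) + c k i := fun k hk i hi => by
    have : (1 : ℝ) ≤ i := by exact_mod_cast (mem_Icc.1 hi).1
    simp only [c]; split_ifs <;> linarith
  -- `K` is only known to be independent of the vector `(T (i + 1))_{i < n}`
  set G : ℕ → (Fin n → ℝ) → ℝ := fun k v => exp (-∑ i : Fin n, c k (i + 1) * v i)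
  have hGV : ∀ k ω,
      G k (fun i : Fin n => T (i + 1) ω) = exp (-∑ i ∈ Icc 1 n, c k i * T i ω) := fun k ω => by
    simp only [G]
    rw [Fin.sum_univ_eq_sum_range (fun i => c k (i + 1) * T (i + 1) ω), range_eq_Ico,
      sum_Ico_add' (fun i => c k i * T i ω), zero_add, Ico_add_one_right_eq_Icc]
  have hlhs : ∀ ω, exp (-x * ∑ i ∈ Icc 1 n, T i ω - y * ∑ i ∈ Icc (K ω + 1) n, T i ω)
      = G (K ω) (fun i : Fin n => T (i + 1) ω) := fun ω => by
    rw [hGV, sum_Icc_mul_add_ite]; ring_nf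
  have hlaw : ∀ k ∈ Icc 1 (n - 1),
      Integrable (fun ω => exp (-∑ i ∈ Icc 1 n, c k i * T i ω)) μ ∧
      ∫ ω, exp (-∑ i ∈ Icc 1 n, c k i * T i ω) ∂μ = ∏ i ∈ Icc 1 n, (i : ℝ) / (i + c k i) :=
    fun k hk => hTi.integral_exp_neg_sum_mul hT hTexp
      (fun i hi => by exact_mod_cast (mem_Icc.1 hi).1) (hc k hk)
  simp_rw [hlhs]
  rw [hKindep.integral_comp_eq_sum_s13 hK hKrange (fun k => by fun_prop)
    (fun k hk => by simpa only [hGV] using (hlaw k hk).1)]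
  refine sum_congr rfl fun k hk => ?_
  simp only [hGV, (hlaw k hk).2]
  rw [prod_Icc_div_add_ite hxy (by have := (mem_Icc.1 hk).2; omega)]

/-- For each `n ≥ 2` let `T_1, …, T_n` be independent exponentials of rates
`1, …, n` and `K` an independent index with
`P(K = k) = 2(n+1)/((n−1)(k+2)(k+1))` on `{1, …, n−1}`; set
`U_n = T_1 + … + T_n` and `τ⁽ⁿ⁾ = T_{K+1} + … + T_n`.  Then for all `x > 0`
and `y > 1`, `n^{x+1} · E[e^{−x·U_n − y·τ⁽ⁿ⁾}] → 2Γ(x+1)/(y−1)` as `n → ∞`. -/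
theorem statement13
    (Ω : ℕ → Type*) [∀ n, MeasureSpace (Ω n)]
    [∀ n, IsProbabilityMeasure (ℙ : Measure (Ω n))]
    (T : ∀ n, ℕ → Ω n → ℝ) (K : ∀ n, Ω n → ℕ)
    (hTmeas : ∀ n i, Measurable (T n i))
    (hTindep : ∀ n, iIndepFun (T n) ℙ)
    (hTexp : ∀ n, ∀ i ∈ Finset.Icc 1 n, Measure.map (T n i) ℙ = expMeasure i)
    (hKmeas : ∀ n, Measurable (K n))
    (hKrange : ∀ n, 2 ≤ n → ∀ ω, K n ω ∈ Finset.Icc 1 (n - 1))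
    (hKindep : ∀ n, IndepFun (fun ω (i : Fin n) => T n (i + 1) ω) (K n) ℙ)
    (hKdist : ∀ n, 2 ≤ n → ∀ k ∈ Finset.Icc 1 (n - 1),
      ℙ {ω | K n ω = k} = ENNReal.ofReal
        (2 * ((n : ℝ) + 1) / (((n : ℝ) - 1) * ((k : ℝ) + 2) * ((k : ℝ) + 1))))
    (x y : ℝ) (hx : 0 < x) (hy : 1 < y) :
    Tendsto (fun n : ℕ =>
        (n : ℝ) ^ (x + 1) *
          ∫ ω, Real.exp (-x * ∑ i ∈ Finset.Icc 1 n, T n i ω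
              - y * ∑ i ∈ Finset.Icc (K n ω + 1) n, T n i ω) ∂ℙ)
      atTop (nhds (2 * Real.Gamma (x + 1) / (y - 1))) := by
  refine (tendsto_rpow_mul_sum_laplaceProd hx hy).congr' ?_
  filter_upwards [eventually_ge_atTop 2] with n hn
  rw [integral_exp_neg_height_sub_mrca (hTmeas n) (hTindep n) (hTexp n) (hKmeas n) (hKrange n hn)
    (hKindep n) (by linarith) (by linarith)]
  refine congrArg _ (sum_congr rfl fun k hk => ?_)
  have : (0 : ℝ) < n - 1 := by
    have : (2 : ℝ) ≤ n := by exact_mod_cast hn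
    linarith
  rw [measureReal_def, hKdist n hn k hk, ENNReal.toReal_ofReal (by positivity)]
end

section
/- Let E_1, …, E_n be independent, identically distributed exponential random variables with rate 1. Then ∑_{i=1}^n E_i/i has the same distribution as max(E_1, …, E_n); equivalently, for every real t ≥ 0, P(∑_{i=1}^n E_i/i ≤ t) = (1 − e^{−t})^n. -/
open scoped ENNReal
open MeasureTheory ProbabilityTheory Real Set

/-!
Induction on `n`. Since `E_{n+1} / (n+1)` is independent of `S_n = ∑_{i ≤ n} E_i / i`,
`P(S_{n+1} ≤ t) = ∫ P(S_n ≤ t - u/(n+1)) e^{-u} du`. With `(1 - e^{-s})^n` inserted for the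
distribution function of `S_n`, the integrand is the `u`-derivative of
`-(e^{-u/(n+1)} - e^{-t})^{n+1}`, which integrates over `[0, (n+1)t]` to `(1 - e^{-t})^{n+1}`.
-/

theorem ProbabilityTheory.IndepFun.measure_add_le_eq_lintegral {Ω : Type*} [MeasurableSpace Ω]
    {μ : Measure Ω} [IsFiniteMeasure μ] {X Y : Ω → ℝ} (hX : Measurable X) (hY : Measurable Y)
    (hXY : IndepFun X Y μ) (t : ℝ) :
    μ {ω | X ω + Y ω ≤ t} = ∫⁻ y, μ {ω | X ω ≤ t - y} ∂(μ.map Y) := by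
  have hS : MeasurableSet {p : ℝ × ℝ | p.1 + p.2 ≤ t} :=
    measurableSet_le (by fun_prop) (by fun_prop)
  rw [show {ω | X ω + Y ω ≤ t} = (fun ω => (X ω, Y ω)) ⁻¹' {p | p.1 + p.2 ≤ t} from rfl,
    ← Measure.map_apply (hX.prodMk hY) hS,
    (indepFun_iff_map_prod_eq_prod_map_map hX.aemeasurable hY.aemeasurable).1 hXY,
    Measure.prod_apply_symm hS]
  refine lintegral_congr fun y => ?_
  have hfiber : (fun x => (x, y)) ⁻¹' {p : ℝ × ℝ | p.1 + p.2 ≤ t} = Iic (t - y) := by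
    ext x; simp [le_sub_iff_add_le]
  rw [hfiber, Measure.map_apply hX measurableSet_Iic]
  rfl

/-- The cutoff at `0` makes this the distribution function of `∑_{i ≤ n} E_i / i` at every
real argument, which the induction on `n` needs. -/
noncomputable def expMaxCDF (n : ℕ) (s : ℝ) : ℝ≥0∞ :=
  if 0 ≤ s then ENNReal.ofReal ((1 - exp (-s)) ^ n) else 0

theorem measurable_expMaxCDF (n : ℕ) : Measurable (expMaxCDF n) :=
  Measurable.ite measurableSet_Ici (by fun_prop) measurable_const

theorem hasDerivAt_neg_exp_neg_div_sub_exp_pow (m : ℕ) (t u : ℝ) :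
    HasDerivAt (fun u : ℝ => -(exp (-(u / (m + 1))) - exp (-t)) ^ (m + 1))
      (exp (-u) * (1 - exp (-(t - u / (m + 1)))) ^ m) u := by
  set c : ℝ := m + 1 with hc
  have hc0 : c ≠ 0 := by positivity
  have hlin : HasDerivAt (fun u : ℝ => -(u / c)) (-(1 / c)) u := by
    simpa using ((hasDerivAt_id u).div_const c).fun_neg
  refine (((hlin.exp.sub_const (exp (-t))).fun_pow (m + 1)).fun_neg).congr_deriv ?_
  have hexp : exp (-u) = exp (-(u / c)) ^ (m + 1) := by
    rw [← exp_nat_mul]; push_cast [← hc]; field_simp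
  have hfactor : exp (-(u / c)) * (1 - exp (-(t - u / c))) = exp (-(u / c)) - exp (-t) := by
    rw [mul_sub, mul_one, ← exp_add]; ring_nf
  rw [hexp, pow_succ', mul_assoc (exp (-(u / c))), ← mul_pow, hfactor, Nat.add_sub_cancel]
  push_cast [← hc]
  field_simp

theorem integral_exp_neg_mul_one_sub_exp_pow (m : ℕ) (t : ℝ) :
    ∫ u in (0 : ℝ)..(m + 1) * t, exp (-u) * (1 - exp (-(t - u / (m + 1)))) ^ m
      = (1 - exp (-t)) ^ (m + 1) := by
  rw [intervalIntegral.integral_eq_sub_of_hasDerivAt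
    (fun u _ => hasDerivAt_neg_exp_neg_div_sub_exp_pow m t u)
    (Continuous.intervalIntegrable (by fun_prop) _ _)]
  have hc : (m : ℝ) + 1 ≠ 0 := by positivity
  simp [mul_div_cancel_left₀ t hc]

theorem exponentialPDF_one_mul_expMaxCDF_sub_div (m : ℕ) (t u : ℝ) :
    exponentialPDF 1 u * expMaxCDF m (t - u / (m + 1))
      = (Icc 0 ((m + 1) * t)).indicator
          (fun u => ENNReal.ofReal (exp (-u) * (1 - exp (-(t - u / (m + 1)))) ^ m)) u := by
  have hut : 0 ≤ t - u / (m + 1) ↔ u ≤ (m + 1) * t := by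
    rw [sub_nonneg, div_le_iff₀' (by positivity)]
  by_cases hu0 : 0 ≤ u
  · by_cases hu : u ≤ (m + 1) * t
    · rw [indicator_of_mem (show u ∈ Icc 0 ((m + 1) * t) from ⟨hu0, hu⟩), expMaxCDF,
        if_pos (hut.2 hu), exponentialPDF_of_nonneg hu0, ← ENNReal.ofReal_mul (by positivity)]
      simp
    · rw [indicator_of_notMem (fun h => hu h.2), expMaxCDF, if_neg (mt hut.1 hu), mul_zero]
  · rw [indicator_of_notMem (fun h => hu0 h.1), exponentialPDF_of_neg (not_le.1 hu0), zero_mul]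

theorem lintegral_expMeasure_expMaxCDF_sub_div (m : ℕ) (t : ℝ) :
    ∫⁻ u, expMaxCDF m (t - u / (m + 1)) ∂expMeasure 1 = expMaxCDF (m + 1) t := by
  have hmeas : Measurable fun u : ℝ => expMaxCDF m (t - u / (m + 1)) :=
    (measurable_expMaxCDF m).comp (by fun_prop)
  rw [show expMeasure 1 = volume.withDensity (exponentialPDF 1) from rfl,
    lintegral_withDensity_eq_lintegral_mul _ (f := exponentialPDF 1)
      (measurable_exponentialPDFReal 1).ennreal_ofReal hmeas]
  simp only [Pi.mul_apply, exponentialPDF_one_mul_expMaxCDF_sub_div]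
  rw [lintegral_indicator measurableSet_Icc]
  by_cases ht : 0 ≤ t
  · have hnonneg : ∀ u ∈ Icc 0 ((m + 1) * t),
        0 ≤ exp (-u) * (1 - exp (-(t - u / (m + 1)))) ^ m := by
      intro u hu
      have : u / (m + 1) ≤ t := by rw [div_le_iff₀' (by positivity)]; exact hu.2
      have : exp (-(t - u / (m + 1))) ≤ 1 := exp_le_one_iff.2 (by linarith)
      exact mul_nonneg (exp_nonneg _) (pow_nonneg (by linarith) m)
    rw [← ofReal_integral_eq_lintegral_ofReal (Continuous.integrableOn_Icc (by fun_prop))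
        ((ae_restrict_iff' measurableSet_Icc).2 (ae_of_all _ hnonneg)),
      integral_Icc_eq_integral_Ioc, ← intervalIntegral.integral_of_le (by positivity),
      integral_exp_neg_mul_one_sub_exp_pow, expMaxCDF, if_pos ht]
  · rw [Icc_eq_empty (by nlinarith), Measure.restrict_empty, lintegral_zero_measure,
      expMaxCDF, if_neg ht]

theorem measure_sum_div_le_eq_expMaxCDF {Ω : Type*} [MeasureSpace Ω]
    [IsProbabilityMeasure (ℙ : Measure Ω)] {E : ℕ → Ω → ℝ} (hEmeas : ∀ i, Measurable (E i))
    (hEindep : iIndepFun E ℙ) (n : ℕ)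
    (hEexp : ∀ i, 1 ≤ i → i ≤ n → Measure.map (E i) ℙ = expMeasure 1) (s : ℝ) :
    ℙ {ω | ∑ i ∈ Finset.Icc 1 n, E i ω / i ≤ s} = expMaxCDF n s := by
  induction n generalizing s with
  | zero =>
    by_cases hs : 0 ≤ s <;> simp [expMaxCDF, hs]
  | succ n ih =>
    set F : ℕ → Ω → ℝ := fun i ω => E i ω / i
    have hFmeas : ∀ i, Measurable (F i) := fun i => (hEmeas i).div_const _
    have hFindep : iIndepFun F ℙ :=
      hEindep.comp (fun i x => x / (i : ℝ)) fun i => measurable_id.div_const _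
    have hindep : IndepFun (fun ω => ∑ i ∈ Finset.Icc 1 n, F i ω) (F (n + 1)) ℙ := by
      simpa only [Finset.sum_fn] using
        hFindep.indepFun_finsetSum_of_notMem hFmeas (by simp : n + 1 ∉ Finset.Icc 1 n)
    have hlaw : Measure.map (F (n + 1)) ℙ
        = Measure.map (fun u : ℝ => u / ((n + 1 : ℕ) : ℝ)) (expMeasure 1) := by
      rw [← hEexp (n + 1) (by omega) le_rfl, Measure.map_map (by fun_prop) (hEmeas _)]
      rfl
    simp only [Finset.sum_Icc_succ_top (by omega : 1 ≤ n + 1)]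
    have hcdf : ∀ y, ℙ {ω | ∑ i ∈ Finset.Icc 1 n, F i ω ≤ s - y} = expMaxCDF n (s - y) :=
      fun y => ih (fun i h1 h2 => hEexp i h1 (by omega)) (s - y)
    rw [hindep.measure_add_le_eq_lintegral (by fun_prop) (hFmeas _), hlaw]
    simp only [hcdf]
    have hmeas : Measurable fun y => expMaxCDF n (s - y) :=
      (measurable_expMaxCDF n).comp (by fun_prop)
    rw [lintegral_map hmeas (by fun_prop)]
    push_cast
    exact lintegral_expMeasure_expMaxCDF_sub_div n s

/-- If `E_1, …, E_n` are i.i.d. rate-one exponentials, then `∑_{i=1}^n E_i/i`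
has the same distribution as `max(E_1, …, E_n)`: for every `t ≥ 0`,
`P(∑_{i=1}^n E_i/i ≤ t) = (1 − e^{−t})^n`. -/
theorem statement16 {Ω : Type*} [MeasureSpace Ω] [IsProbabilityMeasure (ℙ : Measure Ω)]
    (n : ℕ) (E : ℕ → Ω → ℝ)
    (hEmeas : ∀ i, Measurable (E i))
    (hEindep : iIndepFun E ℙ)
    (hEexp : ∀ i, 1 ≤ i → i ≤ n → Measure.map (E i) ℙ = expMeasure 1)
    (t : ℝ) (ht : 0 ≤ t) :
    ℙ {ω | ∑ i ∈ Finset.Icc 1 n, E i ω / (i : ℝ) ≤ t}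
      = ENNReal.ofReal ((1 - Real.exp (-t)) ^ n) := by
  rw [measure_sum_div_le_eq_expMaxCDF hEmeas hEindep n hEexp t, expMaxCDF, if_pos ht]
end

section
/- Fix reals α > 1/2 and δ ∈ ℝ, and for each integer n ≥ 2 define ρ_n = 1 − (2α(n−1) + (n+1)((1+2α)·b_{n,2α} − 1)) / ((n−1)(2α−1)(1 + (δ²−1)·b_{n,2α} − δ²·b_{n,α}²)), where b_{n,x} = ∏_{i=1}^n i/(x+i). Then lim_{n→∞} n·ρ_n = 2/(2α−1). -/
/-!
Euler's limit formula for `Γ` gives `b_{n,x} ~ Γ(x + 1) n^{-x}`, so for `α > 1/2` both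
`n b_{n,2α}` and `n b_{n,α}²` tend to `0`. Clearing denominators,
`n ρ_n = (2 + (2α - 1)(n - 1)(E_n - 1) - (1 + 2α)(n + 1) b_{n,2α}) / ((2α - 1) E_n) · n / (n - 1)`
with `E_n = 1 + (δ² - 1) b_{n,2α} - δ² b_{n,α}²`, and every correction term vanishes in the limit.
-/
open Filter Topology

noncomputable def yuleB (x : ℝ) (n : ℕ) : ℝ := ∏ i ∈ Finset.Icc 1 n, (i : ℝ) / (x + i)

lemma yuleB_eq_prod_range (x : ℝ) (n : ℕ) :
    yuleB x n = (n.factorial : ℝ) / ∏ k ∈ Finset.range n, (x + 1 + k) := by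
  rw [yuleB, ← Finset.Ico_add_one_right_eq_Icc, Finset.prod_Ico_eq_prod_range,
    add_tsub_cancel_right, Finset.prod_div_distrib, ← Finset.prod_range_add_one_eq_factorial]
  push_cast
  congr 1 <;> refine Finset.prod_congr rfl fun k _ => by ring

lemma rpow_mul_yuleB_eq_GammaSeq {x : ℝ} (hx : -1 < x) {n : ℕ} (hn : n ≠ 0) :
    (n : ℝ) ^ x * yuleB x n = Real.GammaSeq (x + 1) n * (1 + (x + 1) / n) := by
  have hn' : (0 : ℝ) < n := by positivity
  have hprod : 0 < ∏ k ∈ Finset.range n, (x + 1 + k) :=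
    Finset.prod_pos fun k _ => add_pos_of_pos_of_nonneg (by linarith) k.cast_nonneg
  have hlast : 0 < x + 1 + n := by linarith
  rw [yuleB_eq_prod_range, Real.GammaSeq, Finset.prod_range_succ, Real.rpow_add_one hn'.ne']
  field_simp
  ring

lemma tendsto_rpow_mul_yuleB {x : ℝ} (hx : -1 < x) :
    Tendsto (fun n : ℕ => (n : ℝ) ^ x * yuleB x n) atTop (𝓝 (Real.Gamma (x + 1))) := by
  have h : Tendsto (fun n : ℕ => Real.GammaSeq (x + 1) n * (1 + (x + 1) / n)) atTop
      (𝓝 (Real.Gamma (x + 1) * (1 + 0))) :=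
    (Real.GammaSeq_tendsto_Gamma _).mul
      (tendsto_const_nhds.add (tendsto_const_div_atTop_nhds_zero_nat _))
  rw [add_zero, mul_one] at h
  refine h.congr' ?_
  filter_upwards [eventually_ne_atTop 0] with n hn
  exact (rpow_mul_yuleB_eq_GammaSeq hx hn).symm

lemma tendsto_rpow_mul_yuleB_zero {x t : ℝ} (hx : -1 < x) (ht : t < x) :
    Tendsto (fun n : ℕ => (n : ℝ) ^ t * yuleB x n) atTop (𝓝 0) := by
  have hpow : Tendsto (fun n : ℕ => (n : ℝ) ^ (t - x)) atTop (𝓝 0) := by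
    simpa only [neg_sub, Function.comp_def] using
      (tendsto_rpow_neg_atTop (sub_pos.2 ht)).comp tendsto_natCast_atTop_atTop
  have h := hpow.mul (tendsto_rpow_mul_yuleB hx)
  rw [zero_mul] at h
  refine h.congr' ?_
  filter_upwards [eventually_ne_atTop 0] with n hn
  rw [← mul_assoc, ← Real.rpow_add (by positivity), sub_add_cancel]

lemma tendsto_zero_of_tendsto_natCast_mul {u : ℕ → ℝ} {c : ℝ}
    (h : Tendsto (fun n : ℕ => (n : ℝ) * u n) atTop (𝓝 c)) : Tendsto u atTop (𝓝 0) := by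
  have h' := h.div_atTop tendsto_natCast_atTop_atTop
  refine h'.congr' ?_
  filter_upwards [eventually_ne_atTop 0] with n hn
  field_simp

lemma mul_one_sub_correlation_eq {α N b E : ℝ} (hN : N - 1 ≠ 0) (hα : 2 * α - 1 ≠ 0) (hE : E ≠ 0) :
    N * (1 - (2 * α * (N - 1) + (N + 1) * ((1 + 2 * α) * b - 1)) / ((N - 1) * (2 * α - 1) * E))
      = (2 + (2 * α - 1) * (N * (E - 1) - (E - 1)) - (1 + 2 * α) * (N * b + b))
          / ((2 * α - 1) * E) * (N / (N - 1)) := by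
  field_simp
  ring

lemma tendsto_natCast_mul_correlation {α : ℝ} (hα : 2 * α - 1 ≠ 0) {b E : ℕ → ℝ}
    (hb : Tendsto (fun n : ℕ => (n : ℝ) * b n) atTop (𝓝 0))
    (hE : Tendsto (fun n : ℕ => (n : ℝ) * (E n - 1)) atTop (𝓝 0)) :
    Tendsto (fun n : ℕ => (n : ℝ) * (1 - (2 * α * ((n : ℝ) - 1)
        + ((n : ℝ) + 1) * ((1 + 2 * α) * b n - 1)) / (((n : ℝ) - 1) * (2 * α - 1) * E n)))
      atTop (𝓝 (2 / (2 * α - 1))) := by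
  have hb0 := tendsto_zero_of_tendsto_natCast_mul hb
  have hE0 := tendsto_zero_of_tendsto_natCast_mul hE
  have hE1 : Tendsto E atTop (𝓝 1) := by
    simpa using hE0.add_const 1
  have hnum : Tendsto (fun n : ℕ => 2 + (2 * α - 1) * ((n : ℝ) * (E n - 1) - (E n - 1))
      - (1 + 2 * α) * ((n : ℝ) * b n + b n)) atTop (𝓝 2) := by
    simpa using ((hE.sub hE0).const_mul (2 * α - 1)).const_add 2 |>.sub
      ((hb.add hb0).const_mul (1 + 2 * α))
  have hratio : Tendsto (fun n : ℕ => (n : ℝ) / ((n : ℝ) - 1)) atTop (𝓝 1) := by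
    simpa only [sub_eq_add_neg] using tendsto_natCast_div_add_atTop (-1 : ℝ)
  have hlim := (hnum.div (hE1.const_mul (2 * α - 1)) (by simpa using hα)).mul hratio
  rw [mul_one, mul_one] at hlim
  refine hlim.congr' ?_
  filter_upwards [eventually_ne_atTop 1, hE1.eventually_ne one_ne_zero] with n hn hEn
  exact (mul_one_sub_correlation_eq (sub_ne_zero.2 (by exact_mod_cast hn)) hα hEn).symm

lemma tendsto_natCast_mul_yuleB {x : ℝ} (hx : 1 < x) :
    Tendsto (fun n : ℕ => (n : ℝ) * yuleB x n) atTop (𝓝 0) := by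
  simpa only [Real.rpow_one] using tendsto_rpow_mul_yuleB_zero (t := 1) (by linarith) hx

lemma tendsto_natCast_mul_yuleB_sq {x : ℝ} (hx : 1 / 2 < x) :
    Tendsto (fun n : ℕ => (n : ℝ) * yuleB x n ^ 2) atTop (𝓝 0) := by
  have h := (tendsto_rpow_mul_yuleB_zero (t := 1 / 2) (by linarith) hx).pow 2
  rw [zero_pow two_ne_zero] at h
  refine h.congr fun n => ?_
  rw [← Real.sqrt_eq_rpow, mul_pow, Real.sq_sqrt n.cast_nonneg]

/-- For `α > 1/2` and any `δ`, the interspecies correlation coefficient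
`ρ_n = 1 − (2α(n−1) + (n+1)((1+2α) b_{n,2α} − 1)) / ((n−1)(2α−1)(1 + (δ²−1) b_{n,2α} − δ² b_{n,α}²))`
satisfies `n · ρ_n → 2/(2α−1)` as `n → ∞`, where `b_{n,x} = ∏_{i=1}^n i/(x+i)`. -/
theorem statement19 (α δ : ℝ) (hα : 1 / 2 < α) :
    Tendsto (fun n : ℕ =>
        (n : ℝ) *
          (1 - (2 * α * ((n : ℝ) - 1)
              + ((n : ℝ) + 1) * ((1 + 2 * α) * (∏ i ∈ Finset.Icc 1 n, (i : ℝ) / (2 * α + i)) - 1))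
            / (((n : ℝ) - 1) * (2 * α - 1)
              * (1 + (δ ^ 2 - 1) * (∏ i ∈ Finset.Icc 1 n, (i : ℝ) / (2 * α + i))
                - δ ^ 2 * (∏ i ∈ Finset.Icc 1 n, (i : ℝ) / (α + i)) ^ 2))))
      atTop (nhds (2 / (2 * α - 1))) := by
  have hb := tendsto_natCast_mul_yuleB (x := 2 * α) (by linarith)
  have ha := tendsto_natCast_mul_yuleB_sq hα
  have hE : Tendsto (fun n : ℕ => (n : ℝ) * (1 + (δ ^ 2 - 1) * yuleB (2 * α) n
      - δ ^ 2 * yuleB α n ^ 2 - 1)) atTop (𝓝 0) := by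
    have h := (hb.const_mul (δ ^ 2 - 1)).sub (ha.const_mul (δ ^ 2))
    rw [mul_zero, mul_zero, sub_zero] at h
    exact h.congr fun n => by ring
  exact tendsto_natCast_mul_correlation (by linarith) hb hE
end
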